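/- Let μ be a probability measure on [0,1] with μ([0,x]) ≤ C/(−log x) for all x ∈ (0,1), where C > 0. Then there is a constant C' > 0 such that for all n ≥ 3, J(n,μ) ≤ C'/log n. -/

import Mathlib

open MeasureTheory

/-- `J(n,μ)` : infimum of `∫₀¹ p dμ` over polynomials `p` of degree at most `n`
with `p(0) = 1` and `p ≥ 0` on `[0,1]`. -/
noncomputable def J (n : ℕ) (μ : Measure ℝ) : ℝ :=
  sInf {r : ℝ | ∃ p : Polynomial ℝ, p.natDegree ≤ n ∧ p.eval 0 = 1 ∧
    (∀ x ∈ Set.Icc (0 : ℝ) 1, 0 ≤ p.eval x) ∧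
    r = ∫ x in Set.Icc (0 : ℝ) 1, p.eval x ∂μ}

/-!
Test against `(1 - x)ⁿ`. Below `z = 1/√n` it is at most `1`, contributing at most
`μ([0,z]) ≤ C / (-log z) = 2C / log n`; above `z` it is at most
`(1 - 1/√n)ⁿ ≤ exp(-√n) ≤ 2 / log n`.
-/

open Polynomial Real Set

theorem J_le_setIntegral (μ : Measure ℝ) {n : ℕ} {p : ℝ[X]} (hdeg : p.natDegree ≤ n)
    (h0 : p.eval 0 = 1) (hnonneg : ∀ x ∈ Icc (0 : ℝ) 1, 0 ≤ p.eval x) :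
    J n μ ≤ ∫ x in Icc (0 : ℝ) 1, p.eval x ∂μ := by
  refine csInf_le ⟨0, ?_⟩ ⟨p, hdeg, h0, hnonneg, rfl⟩
  rintro r ⟨q, -, -, hq, rfl⟩
  exact setIntegral_nonneg measurableSet_Icc hq

theorem J_le_setIntegral_one_sub_pow (μ : Measure ℝ) (n : ℕ) :
    J n μ ≤ ∫ x in Icc (0 : ℝ) 1, (1 - x) ^ n ∂μ := by
  have hdeg : ((1 - X : ℝ[X]) ^ n).natDegree ≤ n := by compute_degree!
  simpa using J_le_setIntegral μ hdeg (by simp) fun x hx ↦ by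
    simpa using pow_nonneg (sub_nonneg.2 hx.2) n

theorem setIntegral_one_sub_pow_le (μ : Measure ℝ) [IsProbabilityMeasure μ] (n : ℕ) {z : ℝ}
    (hz0 : 0 ≤ z) (hz1 : z ≤ 1) :
    ∫ x in Icc (0 : ℝ) 1, (1 - x) ^ n ∂μ ≤ (μ (Icc 0 z)).toReal + (1 - z) ^ n := by
  have hint : IntegrableOn (fun x : ℝ ↦ (1 - x) ^ n) (Icc 0 1) μ :=
    (by fun_prop : Continuous fun x : ℝ ↦ (1 - x) ^ n).integrableOn_Icc
  have hsplit : Icc (0 : ℝ) z ∪ Ioc z 1 = Icc 0 1 := Icc_union_Ioc_eq_Icc hz0 hz1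
  have hint_near := hint.mono_set (hsplit ▸ subset_union_left)
  have hint_far := hint.mono_set (hsplit ▸ subset_union_right)
  have hnear : ∫ x in Icc (0 : ℝ) z, (1 - x) ^ n ∂μ ≤ (μ (Icc 0 z)).toReal := by
    refine (setIntegral_mono_on hint_near (integrableOn_const (C := (1 : ℝ))) measurableSet_Icc
      fun x hx ↦ ?_).trans_eq (by simp [measureReal_def])
    exact pow_le_one₀ (by linarith [hx.2]) (by linarith [hx.1])
  have hfar : ∫ x in Ioc z 1, (1 - x) ^ n ∂μ ≤ (1 - z) ^ n := by
    refine (setIntegral_mono_on hint_far (integrableOn_const (C := (1 - z) ^ n)) measurableSet_Ioc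
      fun x hx ↦ ?_).trans ?_
    · exact pow_le_pow_left₀ (by linarith [hx.2]) (by linarith [hx.1]) n
    · rw [setIntegral_const, smul_eq_mul]
      exact mul_le_of_le_one_left (by positivity) measureReal_le_one
  rw [← hsplit, setIntegral_union ((Iic_disjoint_Ioc le_rfl).mono_left Icc_subset_Iic_self)
    measurableSet_Ioc hint_near hint_far]
  exact add_le_add hnear hfar

theorem one_sub_inv_sqrt_pow_le_exp_neg_sqrt (n : ℕ) : (1 - 1 / √n) ^ n ≤ exp (-√n) := by
  rw [← sqrt_div_self']
  exact one_sub_div_pow_le_exp_neg (sqrt_le_self_iff.2 (by norm_cast; omega))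

theorem exp_neg_sqrt_le_two_div_log {x : ℝ} (hx : 1 < x) : exp (-√x) ≤ 2 / log x := by
  have hs : 0 < √x := sqrt_pos.2 (by linarith)
  have hlog : log x ≤ 2 * √x := by
    have := log_le_sub_one_of_pos hs
    rw [log_sqrt (by linarith)] at this
    linarith
  calc exp (-√x) ≤ 1 / √x := by
        rw [exp_neg, one_div]
        exact inv_anti₀ hs (by linarith [add_one_le_exp √x])
    _ ≤ 2 / log x := by
        rw [div_le_div_iff₀ hs (log_pos hx)]
        linarith

theorem J_le_of_log_decay_general (μ : Measure ℝ) [IsProbabilityMeasure μ]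
    (C : ℝ) (hC : 0 < C)
    (hdecay : ∀ x ∈ Set.Ioo (0 : ℝ) 1, (μ (Set.Icc 0 x)).toReal ≤ C / (-Real.log x)) :
    ∃ C' > 0, ∀ n : ℕ, 3 ≤ n → J n μ ≤ C' / Real.log n := by
  refine ⟨2 * C + 2, by positivity, fun n hn ↦ ?_⟩
  have hn : (1 : ℝ) < n := by exact_mod_cast (by omega : 1 < n)
  have hs : 1 < √(n : ℝ) := by rwa [lt_sqrt zero_le_one, one_pow]
  have hz : 1 / √(n : ℝ) ∈ Ioo 0 1 := ⟨by positivity, (div_lt_one (by positivity)).2 hs⟩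
  have hlog_z : -log (1 / √(n : ℝ)) = log n / 2 := by
    rw [one_div, log_inv, neg_neg, log_sqrt (Nat.cast_nonneg n)]
  calc J n μ ≤ ∫ x in Icc (0 : ℝ) 1, (1 - x) ^ n ∂μ := J_le_setIntegral_one_sub_pow μ n
    _ ≤ (μ (Icc 0 (1 / √(n : ℝ)))).toReal + (1 - 1 / √(n : ℝ)) ^ n :=
        setIntegral_one_sub_pow_le μ n hz.1.le hz.2.le
    _ ≤ C / (log n / 2) + 2 / log n := by
        rw [← hlog_z]
        exact add_le_add (hdecay _ hz) ((one_sub_inv_sqrt_pow_le_exp_neg_sqrt n).trans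
          (exp_neg_sqrt_le_two_div_log hn))
    _ = (2 * C + 2) / log n := by ring

/-- Sublogarithmic decay of `μ` near `0` gives `J(n,μ) ≤ C'/log n`. -/
theorem J_le_of_log_decay (μ : Measure ℝ) [IsProbabilityMeasure μ]
    (hμ : μ (Set.Icc (0 : ℝ) 1)ᶜ = 0)
    (C : ℝ) (hC : 0 < C)
    (hdecay : ∀ x ∈ Set.Ioo (0 : ℝ) 1, (μ (Set.Icc 0 x)).toReal ≤ C / (-Real.log x)) :
    ∃ C' > 0, ∀ n : ℕ, 3 ≤ n → J n μ ≤ C' / Real.log n :=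
  J_le_of_log_decay_general μ C hC hdecay
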